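/- arXiv:2310.12047 — 3 statements merged into one kernel-verified Lean document; each statement's English description precedes it below -/
import Mathlib

section
/- For every integer n ≥ 3, k(S_n) = α(n) + 2β(n) and k(A_n) = 2α(n) + β(n), where α(n) is the number of conjugacy classes of even permutations in S_n that split into two conjugacy classes in A_n, and β(n) is the number of conjugacy classes of even permutations in S_n that remain a single conjugacy class in A_n. -/
/-- An `Sₙ`-conjugacy class consists of even permutations. -/
def IsEvenClass (n : ℕ) (c : ConjClasses (Equiv.Perm (Fin n))) : Prop :=
  ∀ x ∈ c.carrier, x ∈ alternatingGroup (Fin n)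

/-- An `Sₙ`-conjugacy class of even permutations splits into two `Aₙ`-classes. -/
def SplitsInAlt (n : ℕ) (c : ConjClasses (Equiv.Perm (Fin n))) : Prop :=
  ∃ σ τ : alternatingGroup (Fin n),
    ConjClasses.mk (σ : Equiv.Perm (Fin n)) = c ∧
    ConjClasses.mk (τ : Equiv.Perm (Fin n)) = c ∧ ¬ IsConj σ τ

/-- The number of even `Sₙ`-classes splitting in `Aₙ`. -/
noncomputable def alphaFn (n : ℕ) : ℕ :=
  Nat.card {c : ConjClasses (Equiv.Perm (Fin n)) // IsEvenClass n c ∧ SplitsInAlt n c}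

/-- The number of even `Sₙ`-classes not splitting in `Aₙ`. -/
noncomputable def betaFn (n : ℕ) : ℕ :=
  Nat.card {c : ConjClasses (Equiv.Perm (Fin n)) // IsEvenClass n c ∧ ¬ SplitsInAlt n c}

/-!
Let `N` have index two in the finite group `G`. For `x ∈ N`, the `G`-class of `x` splits in `N`
exactly when the centralizer `C(x)` lies in `N`; otherwise `C(x) ∩ N` and `C(x) \ N` have the
same size, a commuting `y ∉ N` translating one onto the other. Summing `|C(x)|` over a union of
`G`-classes gives `|G|` times the number of classes. Summing `|C(x) ∩ N|` over `x ∈ N` thus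
gives `k(N) |N| = α |G| + β |G| / 2`, i.e. `k(N) = 2α + β`; and counting the commuting pairs
`(x, y)` with `x ∈ N`, `y ∉ N` in both orders shows that `G` has exactly `β` classes outside
`N`, so `k(G) = (α + β) + β`.
-/

open scoped Classical

namespace ConjClasses

variable {G : Type*} [Group G]

def SplitsIn (N : Subgroup G) (c : ConjClasses G) : Prop :=
  ∃ σ τ : N, ConjClasses.mk (σ : G) = c ∧ ConjClasses.mk (τ : G) = c ∧ ¬ IsConj σ τ

variable {N : Subgroup G}

theorem carrier_mk_subset_iff [N.Normal] {x : G} :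
    (ConjClasses.mk x).carrier ⊆ (N : Set G) ↔ x ∈ N := by
  refine ⟨fun h => h mem_carrier_mk, fun hx y hy => ?_⟩
  obtain ⟨g, rfl⟩ := isConj_iff.1 (mk_eq_mk_iff_isConj.1 (mem_carrier_iff_mk_eq.1 hy).symm)
  exact ‹N.Normal›.conj_mem x hx g

/-- A conjugator outside `N` is corrected by `y`, which lies outside `N` and fixes `σ`. -/
theorem _root_.Subgroup.isConj_of_isConj_coe_of_commute (hN : N.index = 2) {σ τ : N}
    (h : IsConj (σ : G) τ) {y : G} (hy : y ∉ N) (hσy : Commute (σ : G) y) : IsConj σ τ := by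
  obtain ⟨g, hg⟩ := isConj_iff.1 h
  by_cases hgN : g ∈ N
  · exact isConj_iff.2 ⟨⟨g, hgN⟩, Subtype.ext hg⟩
  · refine isConj_iff.2 ⟨⟨g * y, by simp [Subgroup.mul_mem_iff_of_index_two hN, hgN, hy]⟩,
      Subtype.ext ?_⟩
    rw [← hg]
    simp only [Subgroup.coe_mul, InvMemClass.coe_inv, mul_inv_rev]
    rw [mul_assoc g y, ← hσy.eq]
    group

theorem splitsIn_mk_iff (hN : N.index = 2) {x : G} (hx : x ∈ N) :
    (ConjClasses.mk x).SplitsIn N ↔ Subgroup.centralizer {x} ≤ N := by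
  have : N.Normal := Subgroup.normal_of_index_eq_two hN
  constructor
  · rintro ⟨σ, τ, hσ, hτ, hστ⟩
    by_contra hle
    obtain ⟨y, hyx, hy⟩ := SetLike.not_le_iff_exists.1 hle
    have hxy : Commute x y := (Subgroup.mem_centralizer_singleton_iff.1 hyx).symm
    have hconj {ρ : N} (hρ : ConjClasses.mk (ρ : G) = ConjClasses.mk x) :
        IsConj (⟨x, hx⟩ : N) ρ :=
      Subgroup.isConj_of_isConj_coe_of_commute hN (mk_eq_mk_iff_isConj.1 hρ.symm) hy hxy
    exact hστ ((hconj hσ).symm.trans (hconj hτ))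
  · intro hle
    obtain ⟨g, hg⟩ : ∃ g, g ∉ N := by
      by_contra! h
      simp [(Subgroup.eq_top_iff' N).2 h] at hN
    refine ⟨⟨x, hx⟩, ⟨g * x * g⁻¹, this.conj_mem x hx g⟩, rfl,
      mk_eq_mk_iff_isConj.2 (isConj_iff.2 ⟨g, rfl⟩).symm, fun h => hg ?_⟩
    obtain ⟨⟨u, huN⟩, hu⟩ := isConj_iff.1 h
    have hux : g⁻¹ * u ∈ Subgroup.centralizer {x} := by
      rw [Subgroup.mem_centralizer_singleton_iff]
      have hu' : u * x * u⁻¹ = g * x * g⁻¹ := congrArg Subtype.val hu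
      calc g⁻¹ * u * x = g⁻¹ * (u * x * u⁻¹) * u := by group
        _ = x * (g⁻¹ * u) := by rw [hu']; group
    simpa using N.mul_mem huN (inv_mem (hle hux))

theorem carrier_mk_subset_and_splitsIn_iff (hN : N.index = 2) (x : G) :
    (ConjClasses.mk x).carrier ⊆ (N : Set G) ∧ (ConjClasses.mk x).SplitsIn N ↔
      x ∈ N ∧ Subgroup.centralizer {x} ≤ N := by
  have : N.Normal := Subgroup.normal_of_index_eq_two hN
  rw [carrier_mk_subset_iff]
  exact and_congr_right (splitsIn_mk_iff hN)

theorem carrier_mk_subset_and_not_splitsIn_iff (hN : N.index = 2) (x : G) :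
    (ConjClasses.mk x).carrier ⊆ (N : Set G) ∧ ¬ (ConjClasses.mk x).SplitsIn N ↔
      x ∈ N ∧ ¬ Subgroup.centralizer {x} ≤ N := by
  have : N.Normal := Subgroup.normal_of_index_eq_two hN
  rw [carrier_mk_subset_iff]
  exact and_congr_right fun hx => not_congr (splitsIn_mk_iff hN hx)

end ConjClasses

open Finset

variable {G : Type*} [Group G] [Fintype G]

section ClassEquation

theorem card_isConj_mul_card_commute (x : G) :
    #{y | IsConj x y} * #{z | Commute x z} = Fintype.card G := by
  rw [← ConjAct.card, ← MulAction.card_orbit_mul_card_stabilizer_eq_card_group (ConjAct G) x]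
  congr 1
  · rw [← Fintype.card_subtype]
    exact Fintype.card_congr (Equiv.subtypeEquivRight fun y => by
      rw [ConjAct.mem_orbit_conjAct, isConj_comm])
  · rw [← Fintype.card_subtype]
    refine Fintype.card_congr (Equiv.subtypeEquiv ConjAct.ofConjAct.toEquiv fun g => ?_).symm
    rw [MulAction.mem_stabilizer_iff, ConjAct.smul_def, mul_inv_eq_iff_eq_mul]
    exact eq_comm

theorem card_commute_eq_of_isConj {x y : G} (h : IsConj x y) :
    #{z | Commute x z} = #{z | Commute y z} := by
  have hclass : univ.filter (IsConj x) = univ.filter (IsConj y) :=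
    filter_congr fun w _ => ⟨h.symm.trans, h.trans⟩
  refine Nat.eq_of_mul_eq_mul_left
    (card_pos.2 ⟨x, mem_filter.2 ⟨mem_univ x, IsConj.refl x⟩⟩) ?_
  rw [card_isConj_mul_card_commute, hclass, card_isConj_mul_card_commute]

theorem sum_card_commute_of_isConj (x : G) :
    ∑ y with IsConj x y, #{z | Commute y z} = Fintype.card G := by
  rw [sum_congr rfl fun y hy => (card_commute_eq_of_isConj (mem_filter.1 hy).2).symm,
    sum_const, smul_eq_mul, card_isConj_mul_card_commute]

theorem sum_card_commute_eq_card_mul (P : ConjClasses G → Prop) (p : G → Prop)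
    [DecidablePred p] (hp : ∀ x, P (ConjClasses.mk x) ↔ p x) :
    ∑ x with p x, #{z | Commute x z} = Nat.card {c // P c} * Fintype.card G := by
  rw [← filter_congr fun x _ => hp x]
  have hmaps : ∀ x ∈ ({x | P (ConjClasses.mk x)} : Finset G),
      ConjClasses.mk x ∈ ({c | P c} : Finset _) := fun x hx => by simpa using hx
  rw [← sum_fiberwise_of_maps_to hmaps, Nat.card_eq_fintype_card, Fintype.card_subtype,
    ← smul_eq_mul, ← sum_const]
  refine sum_congr rfl fun c hc => ?_
  obtain ⟨x, rfl⟩ := ConjClasses.exists_rep c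
  rw [← sum_card_commute_of_isConj x, filter_filter]
  refine sum_congr (filter_congr fun y _ => ?_) fun _ _ => rfl
  rw [ConjClasses.mk_eq_mk_iff_isConj, isConj_comm]
  exact ⟨And.right, fun h =>
    ⟨by simpa [ConjClasses.mk_eq_mk_iff_isConj.2 h.symm] using hc, h⟩⟩

end ClassEquation

section IndexTwo

variable {N : Subgroup G}

theorem card_commute_mem_add_card_commute_not_mem (x : G) :
    #{z | Commute x z ∧ z ∈ N} + #{z | Commute x z ∧ z ∉ N} = #{z | Commute x z} := by
  rw [← card_filter_add_card_filter_not (s := {z | Commute x z}) (· ∈ N), filter_filter,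
    filter_filter]

theorem card_commute_mem_eq_card_commute_not_mem (hN : N.index = 2) {x y : G} (hy : y ∉ N)
    (hxy : Commute x y) : #{z | Commute x z ∧ z ∈ N} = #{z | Commute x z ∧ z ∉ N} := by
  refine card_bij' (fun z _ => z * y) (fun z _ => z * y⁻¹) (fun z hz => ?_) (fun z hz => ?_)
    (fun z _ => by group) (fun z _ => by group) <;>
  simp only [mem_filter, mem_univ, true_and] at hz ⊢
  all_goals refine ⟨?_, by simp [Subgroup.mul_mem_iff_of_index_two hN, hz.2, hy]⟩
  · exact hz.1.mul_right hxy
  · exact hz.1.mul_right hxy.inv_right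

theorem card_commute_eq_two_mul_card_commute_mem (hN : N.index = 2) {x y : G} (hy : y ∉ N)
    (hxy : Commute x y) : #{z | Commute x z} = 2 * #{z | Commute x z ∧ z ∈ N} := by
  rw [← card_commute_mem_add_card_commute_not_mem,
    ← card_commute_mem_eq_card_commute_not_mem hN hy hxy, two_mul]

theorem card_commute_eq_two_mul_card_commute_not_mem (hN : N.index = 2) {x y : G} (hy : y ∉ N)
    (hxy : Commute x y) : #{z | Commute x z} = 2 * #{z | Commute x z ∧ z ∉ N} := by
  rw [← card_commute_mem_add_card_commute_not_mem,
    card_commute_mem_eq_card_commute_not_mem hN hy hxy, two_mul]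

theorem card_commute_not_mem_eq_zero {x : G} (hx : Subgroup.centralizer {x} ≤ N) :
    #{z | Commute x z ∧ z ∉ N} = 0 :=
  card_eq_zero.2 <| filter_eq_empty_iff.2 fun _ _ ⟨hxz, hz⟩ =>
    hz (hx (Subgroup.mem_centralizer_singleton_iff.2 hxz.eq.symm))

theorem card_commute_mem_eq_card_commute {x : G} (hx : Subgroup.centralizer {x} ≤ N) :
    #{z | Commute x z ∧ z ∈ N} = #{z | Commute x z} := by
  rw [← card_commute_mem_add_card_commute_not_mem (N := N) x, card_commute_not_mem_eq_zero hx,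
    add_zero]

theorem sum_card_commute_mem_eq_sum_card_commute_not_mem :
    ∑ y with y ∉ N, #{x | Commute y x ∧ x ∈ N} =
      ∑ x with x ∈ N, #{y | Commute x y ∧ y ∉ N} := by
  have := sum_card_bipartiteAbove_eq_sum_card_bipartiteBelow (s := {y : G | y ∉ N})
    (t := {x | x ∈ N}) (r := Commute)
  simp only [bipartiteAbove, bipartiteBelow, filter_filter] at this
  convert this using 3 with y _ x _
  · exact filter_congr fun _ _ => and_comm
  · exact filter_congr fun _ _ => ⟨fun h => ⟨h.2, h.1.symm⟩, fun h => ⟨h.2.symm, h.1⟩⟩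

theorem sum_card_commute_subgroup_eq :
    ∑ x : N, #{z : N | Commute x z} = ∑ x with x ∈ N, #{z | Commute x z ∧ z ∈ N} := by
  rw [sum_subtype (p := (· ∈ N)) _ (fun x => by simp) fun x => #{z | Commute x z ∧ z ∈ N}]
  refine sum_congr rfl fun x _ => ?_
  rw [← Fintype.card_subtype, ← Fintype.card_subtype]
  exact Fintype.card_congr <|
    (Equiv.subtypeEquivRight fun z => Submonoid.commute_coe_coe.symm).trans
      ((Equiv.subtypeSubtypeEquivSubtypeInter (· ∈ N) (Commute (x : G))).trans
        (Equiv.subtypeEquivRight fun _ => and_comm))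

theorem card_conjClasses_not_subset_eq (hN : N.index = 2) :
    Nat.card {c : ConjClasses G // ¬ c.carrier ⊆ (N : Set G)} =
      Nat.card {c : ConjClasses G // c.carrier ⊆ (N : Set G) ∧ ¬ c.SplitsIn N} := by
  have : N.Normal := Subgroup.normal_of_index_eq_two hN
  refine Nat.eq_of_mul_eq_mul_right (Fintype.card_pos (α := G)) ?_
  rw [← sum_card_commute_eq_card_mul (fun c => ¬ c.carrier ⊆ (N : Set G)) (· ∉ N)
      fun x => not_congr ConjClasses.carrier_mk_subset_iff,
    ← sum_card_commute_eq_card_mul (fun c => c.carrier ⊆ (N : Set G) ∧ ¬ c.SplitsIn N) _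
      (ConjClasses.carrier_mk_subset_and_not_splitsIn_iff hN)]
  calc ∑ y with y ∉ N, #{z | Commute y z}
      = ∑ y with y ∉ N, 2 * #{x | Commute y x ∧ x ∈ N} :=
        sum_congr rfl fun y hy =>
          card_commute_eq_two_mul_card_commute_mem hN (mem_filter.1 hy).2 (Commute.refl y)
    _ = 2 * ∑ x with x ∈ N, #{y | Commute x y ∧ y ∉ N} := by
        rw [← mul_sum, sum_card_commute_mem_eq_sum_card_commute_not_mem]
    _ = 2 * ∑ x with x ∈ N ∧ ¬ Subgroup.centralizer {x} ≤ N,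
          #{y | Commute x y ∧ y ∉ N} := by
        rw [← filter_filter, sum_filter_of_ne fun x _ h => mt card_commute_not_mem_eq_zero h]
    _ = ∑ x with x ∈ N ∧ ¬ Subgroup.centralizer {x} ≤ N, #{z | Commute x z} := by
        rw [mul_sum]
        refine sum_congr rfl fun x hx => ?_
        obtain ⟨y, hyx, hy⟩ := SetLike.not_le_iff_exists.1 (mem_filter.1 hx).2.2
        exact (card_commute_eq_two_mul_card_commute_not_mem hN hy
          (Subgroup.mem_centralizer_singleton_iff.1 hyx).symm).symm

theorem card_conjClasses_eq_of_index_eq_two (hN : N.index = 2) :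
    Nat.card (ConjClasses G) =
      Nat.card {c : ConjClasses G // c.carrier ⊆ (N : Set G) ∧ c.SplitsIn N} +
        2 * Nat.card {c : ConjClasses G // c.carrier ⊆ (N : Set G) ∧ ¬ c.SplitsIn N} := by
  have hpartition : Nat.card (ConjClasses G) =
      Nat.card {c : ConjClasses G // c.carrier ⊆ (N : Set G) ∧ c.SplitsIn N} +
        Nat.card {c : ConjClasses G // c.carrier ⊆ (N : Set G) ∧ ¬ c.SplitsIn N} +
          Nat.card {c : ConjClasses G // ¬ c.carrier ⊆ (N : Set G)} := by
    simp only [Nat.card_eq_fintype_card, Fintype.card_subtype]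
    rw [← filter_filter, ← filter_filter, card_filter_add_card_filter_not,
      card_filter_add_card_filter_not, card_univ]
  rw [hpartition, card_conjClasses_not_subset_eq hN]
  ring

theorem card_conjClasses_subgroup_eq_of_index_eq_two (hN : N.index = 2) :
    Nat.card (ConjClasses N) =
      2 * Nat.card {c : ConjClasses G // c.carrier ⊆ (N : Set G) ∧ c.SplitsIn N} +
        Nat.card {c : ConjClasses G // c.carrier ⊆ (N : Set G) ∧ ¬ c.SplitsIn N} := by
  have hG : Fintype.card G = 2 * Fintype.card N := by
    rw [← Nat.card_eq_fintype_card, ← Nat.card_eq_fintype_card, ← N.index_mul_card, hN]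
  have hclassN : ∑ x : N, #{z : N | Commute x z} = Nat.card (ConjClasses N) * Fintype.card N := by
    simpa using sum_card_commute_eq_card_mul (G := N) (fun _ => True) (fun _ => True)
      fun _ => Iff.rfl
  refine Nat.eq_of_mul_eq_mul_right (Fintype.card_pos (α := G)) ?_
  calc Nat.card (ConjClasses N) * Fintype.card G
      = 2 * ∑ x with x ∈ N, #{z | Commute x z ∧ z ∈ N} := by
        rw [← sum_card_commute_subgroup_eq, hclassN, hG]
        ring
    _ = 2 * ∑ x with x ∈ N ∧ Subgroup.centralizer {x} ≤ N, #{z | Commute x z} +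
          ∑ x with x ∈ N ∧ ¬ Subgroup.centralizer {x} ≤ N, #{z | Commute x z} := by
        rw [← sum_filter_add_sum_filter_not _ (fun x => Subgroup.centralizer {x} ≤ N),
          filter_filter, filter_filter, mul_add]
        congr 1
        · refine congrArg (2 * ·) (sum_congr rfl fun x hx => ?_)
          exact card_commute_mem_eq_card_commute (mem_filter.1 hx).2.2
        · rw [mul_sum]
          refine sum_congr rfl fun x hx => ?_
          obtain ⟨y, hyx, hy⟩ := SetLike.not_le_iff_exists.1 (mem_filter.1 hx).2.2
          exact (card_commute_eq_two_mul_card_commute_mem hN hy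
            (Subgroup.mem_centralizer_singleton_iff.1 hyx).symm).symm
    _ = _ := by
        rw [sum_card_commute_eq_card_mul (fun c => c.carrier ⊆ (N : Set G) ∧ c.SplitsIn N) _
            (ConjClasses.carrier_mk_subset_and_splitsIn_iff hN),
          sum_card_commute_eq_card_mul (fun c => c.carrier ⊆ (N : Set G) ∧ ¬ c.SplitsIn N) _
            (ConjClasses.carrier_mk_subset_and_not_splitsIn_iff hN)]
        ring

end IndexTwo

theorem k_symm_alt_alpha_beta (n : ℕ) (hn : 3 ≤ n) :
    Nat.card (ConjClasses (Equiv.Perm (Fin n))) = alphaFn n + 2 * betaFn n ∧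
    Nat.card (ConjClasses (alternatingGroup (Fin n))) = 2 * alphaFn n + betaFn n := by
  have : Nontrivial (Fin n) := Fin.nontrivial_iff_two_le.2 (by omega)
  have hA := alternatingGroup.index_eq_two (α := Fin n)
  exact ⟨card_conjClasses_eq_of_index_eq_two hA,
    card_conjClasses_subgroup_eq_of_index_eq_two hA⟩
end

section
/- For every integer n ≥ 12, k(S_n) > 2·(n−2)·log₂(n), where k(S_n) = p(n) is the number of conjugacy classes of S_n. -/
/-!
Conjugacy classes of `S_n` correspond to cycle types, hence to partitions of `n`, so the claim
is `n ^ (2 (n - 2)) < 2 ^ p(n)`. For `n ≥ 98` let `k = ⌊√(2n)⌋ - 2`: every subset of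
`{2, …, k + 1}` has sum at most `n`, and padding it with ones gives distinct partitions of `n`,
so `p(n) ≥ 2 ^ k`; on the other hand `n < 2 ^ k` and `2 k n < 2 ^ k` because `(k + 3) ^ 3 ≤ 2 ^ k`.
For `12 ≤ n < 98`, monotonicity of `p` reduces the claim to five exact values of `p`, computed
by the recursion on the largest allowed part.
-/

open Finset

namespace Nat.Partition

variable {n : ℕ}

def fillOnes (s : Multiset ℕ) (hs : ∀ i ∈ s, 2 ≤ i) (hsum : s.sum ≤ n) : n.Partition where
  parts := s + Multiset.replicate (n - s.sum) 1
  parts_pos {i} hi := by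
    rcases Multiset.mem_add.mp hi with hi | hi
    · exact zero_lt_two.trans_le (hs i hi)
    · rw [Multiset.eq_of_mem_replicate hi]; exact one_pos
  parts_sum := by simp [hsum]

@[simp]
theorem fillOnes_parts (s : Multiset ℕ) (hs : ∀ i ∈ s, 2 ≤ i) (hsum : s.sum ≤ n) :
    (fillOnes s hs hsum).parts = s + Multiset.replicate (n - s.sum) 1 :=
  rfl

theorem filter_fillOnes_parts (s : Multiset ℕ) (hs : ∀ i ∈ s, 2 ≤ i) (hsum : s.sum ≤ n) :
    (fillOnes s hs hsum).parts.filter (2 ≤ ·) = s := by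
  rw [fillOnes_parts, Multiset.filter_add, Multiset.filter_eq_self.mpr hs,
    Multiset.filter_eq_nil.mpr fun i hi => by simp [Multiset.eq_of_mem_replicate hi], add_zero]

theorem filter_not_two_le_parts (p : n.Partition) :
    p.parts.filter (¬ 2 ≤ ·) = Multiset.replicate (p.parts.filter (¬ 2 ≤ ·)).card 1 :=
  Multiset.eq_replicate_card.mpr fun i hi => by
    have := p.parts_pos (Multiset.mem_of_mem_filter hi)
    have := (Multiset.mem_filter.mp hi).2
    omega

theorem sum_filter_add_card_filter_not (p : n.Partition) :
    (p.parts.filter (2 ≤ ·)).sum + (p.parts.filter (¬ 2 ≤ ·)).card = n := by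
  conv_rhs => rw [← p.parts_sum, ← Multiset.filter_add_not (2 ≤ ·) p.parts, Multiset.sum_add,
    p.filter_not_two_le_parts]
  simp

theorem fillOnes_filter_parts (p : n.Partition) :
    fillOnes (p.parts.filter (2 ≤ ·)) (fun _ hi => (Multiset.mem_filter.mp hi).2)
      (by have := p.sum_filter_add_card_filter_not; omega) = p := by
  ext1
  conv_rhs => rw [← Multiset.filter_add_not (2 ≤ ·) p.parts, p.filter_not_two_le_parts]
  have := p.sum_filter_add_card_filter_not
  rw [fillOnes_parts]
  congr 2
  omega

theorem two_pow_card_le_card (s : Finset ℕ) (hs : ∀ i ∈ s, 2 ≤ i) (hsum : ∑ i ∈ s, i ≤ n) :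
    2 ^ #s ≤ Fintype.card n.Partition := by
  have h_val_sum (u : Finset ℕ) : u.val.sum = ∑ i ∈ u, i := by
    rw [Finset.sum_eq_multiset_sum, Multiset.map_id']
  let f : s.powerset → n.Partition := fun u =>
    fillOnes u.1.val (fun i hi => hs i (mem_powerset.mp u.2 hi))
      (h_val_sum u.1 ▸ (sum_le_sum_of_subset (mem_powerset.mp u.2)).trans hsum)
  rw [← card_powerset, ← Fintype.card_coe]
  refine Fintype.card_le_of_injective f fun u v huv => Subtype.ext (Finset.val_injective ?_)
  simpa only [f, filter_fillOnes_parts] using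
    congrArg (fun p : n.Partition => p.parts.filter (2 ≤ ·)) huv

theorem card_le_card_succ (n : ℕ) : Fintype.card n.Partition ≤ Fintype.card (n + 1).Partition :=
  Fintype.card_le_of_injective
    (fun p => ((partitionWithPartEquiv le_rfl (Nat.le_add_left 1 n)).symm p).1)
    (Subtype.val_injective.comp (Equiv.injective _))

theorem monotone_card : Monotone fun n : ℕ => Fintype.card n.Partition :=
  monotone_nat_of_le_succ card_le_card_succ

end Nat.Partition

/-- `boundedPartitionCount k n` counts the partitions of `n` into parts `≤ k`, sorted by the number
`j` of parts equal to `k`; it recurses structurally on `k`, so the kernel can evaluate it. -/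
def boundedPartitionCount : ℕ → ℕ → ℕ
  | 0, n => if n = 0 then 1 else 0
  | k + 1, n => ∑ j ∈ range (n / (k + 1) + 1), boundedPartitionCount k (n - j * (k + 1))

namespace Nat.Partition

theorem card_restricted_le_zero (n : ℕ) :
    #(restricted n (· ≤ 0)) = if n = 0 then 1 else 0 := by
  split_ifs with hn
  · subst hn
    exact Finset.card_eq_one.mpr ⟨default, eq_singleton_iff_unique_mem.mpr ⟨by simp [restricted],
      fun _ _ => Subsingleton.elim _ _⟩⟩
  · refine Finset.card_eq_zero.mpr (eq_empty_of_forall_notMem fun p hp => hn ?_)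
    have hp := (mem_filter.mp hp).2
    have h_empty : p.parts = 0 := Multiset.eq_zero_of_forall_notMem fun i hi =>
      (p.parts_pos hi).ne' (Nat.le_zero.mp (hp i hi))
    rw [← p.parts_sum, h_empty, Multiset.sum_zero]

/-- Split according to whether `k + 1` is a part; removing one copy of it is
`partitionWithPartEquiv`. -/
theorem card_restricted_le_succ (n k : ℕ) :
    #(restricted n (· ≤ k + 1)) = #(restricted n (· ≤ k)) +
      if k + 1 ≤ n then #(restricted (n - (k + 1)) (· ≤ k + 1)) else 0 := by
  rw [← card_filter_add_card_filter_not (fun p : n.Partition => k + 1 ∉ p.parts)]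
  congr 1
  · congr 1
    ext p
    simp only [restricted, mem_filter, mem_univ, true_and]
    exact ⟨fun ⟨h, hk⟩ i hi => Nat.le_of_lt_succ ((h i hi).lt_of_ne (by rintro rfl; exact hk hi)),
      fun h => ⟨fun i hi => (h i hi).trans k.le_succ, fun hk => by simpa using h _ hk⟩⟩
  · split_ifs with hkn
    · refine card_bij' (fun p hp => partitionWithPartEquiv k.succ_pos hkn ⟨p, ?_⟩)
        (fun q _ => (partitionWithPartEquiv k.succ_pos hkn).symm q) ?_ ?_ ?_ ?_
      · simpa using (mem_filter.mp hp).2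
      · intro p hp
        simp only [restricted, mem_filter, mem_univ, true_and] at hp
        simpa [restricted] using fun i hi => hp.1 i (Multiset.mem_of_mem_erase hi)
      · intro q hq
        simpa [restricted] using (mem_filter.mp hq).2
      · simp
      · simp
    · refine Finset.card_eq_zero.mpr (filter_eq_empty_iff.mpr fun p _ hp => hkn ?_)
      exact le_of_mem_parts (not_not.mp hp)

theorem card_restricted_le_succ_eq_sum (n k : ℕ) :
    #(restricted n (· ≤ k + 1)) =
      ∑ j ∈ range (n / (k + 1) + 1), #(restricted (n - j * (k + 1)) (· ≤ k)) := by
  induction n using Nat.strong_induction_on with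
  | _ n ih =>
    rw [card_restricted_le_succ]
    split_ifs with hkn
    · rw [ih _ (by omega), Nat.div_eq_sub_div (by omega) hkn,
        sum_range_succ' _ ((n - (k + 1)) / (k + 1) + 1), zero_mul, Nat.sub_zero, add_comm]
      congr 1
      refine Finset.sum_congr rfl fun j _ => ?_
      rw [Nat.sub_sub, add_one_mul, Nat.add_comm (j * _)]
    · rw [Nat.div_eq_of_lt (by omega), zero_add, sum_range_one, zero_mul, Nat.sub_zero, add_zero]

theorem card_restricted_le_eq_boundedPartitionCount (k n : ℕ) :
    #(restricted n (· ≤ k)) = boundedPartitionCount k n := by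
  induction k generalizing n with
  | zero => rw [card_restricted_le_zero, boundedPartitionCount]
  | succ k ih => simp only [card_restricted_le_succ_eq_sum, ih, boundedPartitionCount]

theorem card_eq_boundedPartitionCount (n : ℕ) :
    Fintype.card n.Partition = boundedPartitionCount n n := by
  rw [← card_restricted_le_eq_boundedPartitionCount, restricted,
    filter_true_of_mem fun p _ _ => le_of_mem_parts, Finset.card_univ]

end Nat.Partition

namespace Equiv.Perm

theorem partition_eq_fillOnes {α : Type*} [Fintype α] [DecidableEq α] (σ : Perm α) :
    σ.partition = Nat.Partition.fillOnes σ.cycleType (fun _ => two_le_of_mem_cycleType)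
      (σ.sum_cycleType ▸ σ.support.card_le_univ) := by
  ext1
  rw [parts_partition, Nat.Partition.fillOnes_parts, sum_cycleType]

theorem card_conjClasses_eq_card_partition (α : Type*) [Fintype α] :
    Nat.card (ConjClasses (Perm α)) = Fintype.card (Fintype.card α).Partition := by
  classical
  let f : ConjClasses (Perm α) → (Fintype.card α).Partition :=
    Quotient.lift partition fun _ _ => partition_eq_of_isConj.mp
  rw [← Nat.card_eq_fintype_card]
  refine Nat.card_eq_of_bijective f ⟨?_, fun p => ?_⟩
  · rintro ⟨σ⟩ ⟨τ⟩ h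
    exact Quotient.sound (partition_eq_of_isConj.mpr h)
  · obtain ⟨σ, hσ⟩ := (exists_with_cycleType_iff α (m := p.parts.filter (2 ≤ ·))).mpr
      ⟨by have := p.sum_filter_add_card_filter_not; omega,
        fun _ hi => (Multiset.mem_filter.mp hi).2⟩
    refine ⟨ConjClasses.mk σ, ?_⟩
    show σ.partition = p
    simp only [partition_eq_fillOnes, hσ, p.fillOnes_filter_parts]

end Equiv.Perm

theorem cube_add_three_le_two_pow {k : ℕ} (hk : 12 ≤ k) : (k + 3) ^ 3 ≤ 2 ^ k := by
  induction k, hk using Nat.le_induction with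
  | base => norm_num
  | succ k hk ih =>
    calc (k + 1 + 3) ^ 3 ≤ 2 * (k + 3) ^ 3 := by ring_nf; nlinarith
      _ ≤ 2 * 2 ^ k := Nat.mul_le_mul_left 2 ih
      _ = 2 ^ (k + 1) := (pow_succ' 2 k).symm

theorem Real.mul_logb_lt_of_pow_lt {b x : ℝ} {m c : ℕ} (hb : 1 < b) (hx : 0 < x)
    (h : x ^ m < b ^ c) : m * Real.logb b x < c := by
  rw [← Real.logb_pow, Real.logb_lt_iff_lt_rpow hb (by positivity), Real.rpow_natCast]
  exact h

theorem pow_lt_two_pow_card_partition_of_mem_Icc {a b n : ℕ} (ha : 1 ≤ a) (hn : n ∈ Set.Icc a b)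
    (h : b ^ (2 * (b - 2)) < 2 ^ boundedPartitionCount a a) :
    n ^ (2 * (n - 2)) < 2 ^ Fintype.card n.Partition := by
  obtain ⟨han, hnb⟩ := hn
  rw [← Nat.Partition.card_eq_boundedPartitionCount] at h
  calc n ^ (2 * (n - 2)) ≤ b ^ (2 * (b - 2)) :=
        (Nat.pow_le_pow_left hnb _).trans (Nat.pow_le_pow_right (by omega) (by omega))
    _ < 2 ^ Fintype.card a.Partition := h
    _ ≤ 2 ^ Fintype.card n.Partition :=
        Nat.pow_le_pow_right two_pos (Nat.Partition.monotone_card han)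

theorem pow_lt_two_pow_card_partition_of_ge {n : ℕ} (hn : 98 ≤ n) :
    n ^ (2 * (n - 2)) < 2 ^ Fintype.card n.Partition := by
  set k := Nat.sqrt (2 * n) - 2
  have hk : 12 ≤ k := by
    have := Nat.le_sqrt.mpr (by omega : 14 * 14 ≤ 2 * n)
    omega
  have h_lo : (k + 2) ^ 2 ≤ 2 * n := by
    rw [Nat.sub_add_cancel (by omega)]
    exact Nat.sqrt_le' (2 * n)
  have h_hi : 2 * n < (k + 3) ^ 2 := by
    rw [show k + 3 = (2 * n).sqrt + 1 by omega]
    exact Nat.lt_succ_sqrt' (2 * n)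
  have h_growth := cube_add_three_le_two_pow hk
  have h_sum : ∑ i ∈ Ico 2 (k + 2), i ≤ n := by
    have h_gauss := sum_range_id_mul_two (k + 2)
    have h_sub : ∑ i ∈ Ico 2 (k + 2), i ≤ ∑ i ∈ range (k + 2), i := by
      rw [range_eq_Ico]
      exact sum_le_sum_of_subset (Ico_subset_Ico_left zero_le_two)
    have : (k + 2) * (k + 2 - 1) ≤ (k + 2) ^ 2 := by
      rw [sq]; exact Nat.mul_le_mul_left _ (Nat.sub_le _ _)
    omega
  have h_card : 2 ^ k ≤ Fintype.card n.Partition := by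
    simpa using
      Nat.Partition.two_pow_card_le_card (Ico 2 (k + 2)) (fun i hi => (mem_Ico.mp hi).1) h_sum
  have h_n : n < 2 ^ k :=
    calc n ≤ 2 * n := Nat.le_mul_of_pos_left n two_pos
      _ < (k + 3) ^ 2 := h_hi
      _ ≤ (k + 3) ^ 3 := Nat.pow_le_pow_right (by omega) (by norm_num)
      _ ≤ 2 ^ k := h_growth
  have h_exp : k * (2 * (n - 2)) < 2 ^ k :=
    calc k * (2 * (n - 2)) ≤ k * (2 * n) := Nat.mul_le_mul_left _ (by omega)
      _ < (k + 3) * (k + 3) ^ 2 := Nat.mul_lt_mul'' (by omega) h_hi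
      _ = (k + 3) ^ 3 := by ring
      _ ≤ 2 ^ k := h_growth
  calc n ^ (2 * (n - 2)) < (2 ^ k) ^ (2 * (n - 2)) := Nat.pow_lt_pow_left h_n (by omega)
    _ = 2 ^ (k * (2 * (n - 2))) := (pow_mul 2 k _).symm
    _ < 2 ^ 2 ^ k := Nat.pow_lt_pow_right (by norm_num) h_exp
    _ ≤ 2 ^ Fintype.card n.Partition := Nat.pow_le_pow_right (by norm_num) h_card

theorem pow_lt_two_pow_card_partition {n : ℕ} (hn : 12 ≤ n) :
    n ^ (2 * (n - 2)) < 2 ^ Fintype.card n.Partition := by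
  rcases lt_or_ge n 98 with h98 | h98
  · -- `p(12) = 77`, `p(13) = 101`, `p(15) = 176`, `p(18) = 385`, `p(24) = 1575`
    have : n ∈ Set.Icc 12 12 ∨ n ∈ Set.Icc 13 14 ∨ n ∈ Set.Icc 15 17 ∨ n ∈ Set.Icc 18 23 ∨
        n ∈ Set.Icc 24 97 := by simp only [Set.mem_Icc]; omega
    rcases this with h | h | h | h | h <;>
      exact pow_lt_two_pow_card_partition_of_mem_Icc (by norm_num) h (by decide +kernel)
  · exact pow_lt_two_pow_card_partition_of_ge h98

theorem k_symm_gt (n : ℕ) (hn : 12 ≤ n) :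
    2 * ((n : ℝ) - 2) * Real.logb 2 n <
      (Nat.card (ConjClasses (Equiv.Perm (Fin n))) : ℝ) := by
  rw [Equiv.Perm.card_conjClasses_eq_card_partition, Fintype.card_fin]
  have h := Real.mul_logb_lt_of_pow_lt (x := n) one_lt_two (by positivity)
    (by exact_mod_cast pow_lt_two_pow_card_partition hn)
  rwa [Nat.cast_mul, Nat.cast_sub (by omega), Nat.cast_ofNat] at h
end

section
/- For every integer n ≥ 12, p(n) > 2·(n−2)·log₂(n), where p(n) is the partition function. -/
/-!
Padding with ones turns a multiset of parts `≥ 2` with sum at most `n` into a partition of `n`,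
injectively. For `n ≥ 256`, the multisets of `n / 9` parts from `{2, …, 9}` already give
`p(n) ≥ C(n/9 + 7, 7) > 2n²`, while `log₂ n < n`. On `[12, 255]` we cover five windows `[a, b]`:
`b ^ q ≤ 2 ^ p` bounds `log₂` on the window by `p / q`, and the number of multisets with parts in
`{2, …, 9}` and sum at most `a`, computed by a recursion the kernel can evaluate, bounds `p(n)`.
-/

open Finset
open scoped Nat

theorem card_le_card_partition_of_two_le {n : ℕ} (T : Finset (Multiset ℕ))
    (hsum : ∀ s ∈ T, s.sum ≤ n) (htwo : ∀ s ∈ T, ∀ x ∈ s, 2 ≤ x) :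
    #T ≤ Fintype.card n.Partition := by
  let padWithOnes (s : T) : n.Partition :=
    { parts := s.1 + Multiset.replicate (n - s.1.sum) 1
      parts_pos := by
        intro i hi
        rcases Multiset.mem_add.1 hi with hi | hi
        · exact (htwo s s.2 i hi).trans_lt' two_pos
        · rw [Multiset.eq_of_mem_replicate hi]; exact one_pos
      parts_sum := by
        rw [Multiset.sum_add, Multiset.sum_replicate, smul_eq_mul, mul_one]
        exact Nat.add_sub_cancel' (hsum s s.2) }
  have filter_padWithOnes (s : T) : (padWithOnes s).parts.filter (2 ≤ ·) = s.1 := by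
    rw [Multiset.filter_add, Multiset.filter_eq_self.2 (htwo s s.2),
      Multiset.filter_eq_nil.2 fun x hx => by rw [Multiset.eq_of_mem_replicate hx]; omega, add_zero]
  have hinj : Function.Injective padWithOnes := fun s t hst =>
    Subtype.ext <| by rw [← filter_padWithOnes s, ← filter_padWithOnes t, hst]
  simpa using Fintype.card_le_of_injective _ hinj

/-- The multisets with parts in `[2, k + 1]` and sum at most `n`; the recursion chooses the
multiplicity of the largest part. -/
def smallPartMultisets : ℕ → ℕ → Finset (Multiset ℕ)
  | 0, _ => {0}
  | k + 1, n => (range (n / (k + 2) + 1)).biUnion fun m =>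
      (smallPartMultisets k (n - m * (k + 2))).image (Multiset.replicate m (k + 2) + ·)

/-- The cardinality of `smallPartMultisets k n`, by the same recursion: unlike the finset, it is
cheap enough for `decide`. -/
def smallPartCount : ℕ → ℕ → ℕ
  | 0, _ => 1
  | k + 1, n => ∑ m ∈ range (n / (k + 2) + 1), smallPartCount k (n - m * (k + 2))

theorem bounds_of_mem_smallPartMultisets {k n : ℕ} {s : Multiset ℕ}
    (hs : s ∈ smallPartMultisets k n) : s.sum ≤ n ∧ ∀ x ∈ s, 2 ≤ x ∧ x ≤ k + 1 := by
  induction k generalizing n s with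
  | zero =>
    simp only [smallPartMultisets, Finset.mem_singleton] at hs
    simp [hs]
  | succ k ih =>
    simp only [smallPartMultisets, mem_biUnion, Finset.mem_image, Finset.mem_range] at hs
    obtain ⟨m, hm, t, ht, rfl⟩ := hs
    obtain ⟨hsum, hparts⟩ := ih ht
    have hmn : m * (k + 2) ≤ n := (Nat.le_div_iff_mul_le (by omega)).1 (Nat.lt_succ_iff.1 hm)
    refine ⟨by rw [Multiset.sum_add, Multiset.sum_replicate, smul_eq_mul]; omega, fun x hx => ?_⟩
    rcases Multiset.mem_add.1 hx with hx | hx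
    · rw [Multiset.eq_of_mem_replicate hx]; constructor <;> omega
    · have := hparts x hx; constructor <;> omega

theorem card_smallPartMultisets (k n : ℕ) : #(smallPartMultisets k n) = smallPartCount k n := by
  induction k generalizing n with
  | zero => rfl
  | succ k ih =>
    rw [smallPartMultisets, smallPartCount, card_biUnion]
    · refine sum_congr rfl fun m _ => ?_
      rw [card_image_of_injective _ (add_right_injective _), ih]
    · intro a _ b _ hab
      refine Finset.disjoint_left.2 fun s hsa hsb => hab ?_
      simp only [Finset.mem_image] at hsa hsb
      obtain ⟨t, ht, rfl⟩ := hsa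
      obtain ⟨u, hu, hut⟩ := hsb
      -- the multiplicity of the part `k + 2` recovers the index
      have count_top {m : ℕ} {t : Multiset ℕ} (ht : t ∈ smallPartMultisets k (n - m * (k + 2)))
          (m' : ℕ) : (Multiset.replicate m' (k + 2) + t).count (k + 2) = m' := by
        have : k + 2 ∉ t := fun h => by
          have := (bounds_of_mem_smallPartMultisets ht).2 _ h; omega
        rw [Multiset.count_add, Multiset.count_replicate_self,
          Multiset.count_eq_zero_of_notMem this, add_zero]
      rw [← count_top ht a, ← hut, count_top hu b]

theorem smallPartCount_le_card_partition (k : ℕ) {m n : ℕ} (hmn : m ≤ n) :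
    smallPartCount k m ≤ Fintype.card n.Partition := by
  rw [← card_smallPartMultisets]
  exact card_le_card_partition_of_two_le _
    (fun s hs => (bounds_of_mem_smallPartMultisets hs).1.trans hmn)
    (fun s hs x hx => ((bounds_of_mem_smallPartMultisets hs).2 x hx).1)

theorem choose_le_card_partition {k c n : ℕ} (h : c * (k + 1) ≤ n) :
    (k + c - 1).choose c ≤ Fintype.card n.Partition := by
  let shift (s : Sym (Fin k) c) : Multiset ℕ :=
    Multiset.map (fun i : Fin k => (i : ℕ) + 2) s
  have hshift : Function.Injective shift := fun s t hst =>
    Sym.coe_injective <| Multiset.map_injective (f := fun i : Fin k => (i : ℕ) + 2)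
      (fun i j hij => Fin.ext (by simpa using hij)) hst
  have hparts (s : Sym (Fin k) c) : ∀ x ∈ shift s, 2 ≤ x ∧ x ≤ k + 1 := by
    intro x hx
    obtain ⟨i, -, rfl⟩ := Multiset.mem_map.1 hx
    have := i.isLt
    omega
  calc (k + c - 1).choose c = #(univ.image shift) := by
        rw [card_image_of_injective _ hshift, card_univ, Sym.card_sym_eq_choose, Fintype.card_fin]
    _ ≤ Fintype.card n.Partition := by
      refine card_le_card_partition_of_two_le _ ?_ ?_ <;> simp only [Finset.mem_image, mem_univ,
        true_and, forall_exists_index, forall_apply_eq_imp_iff]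
      · intro s
        calc (shift s).sum ≤ Multiset.card (shift s) • (k + 1) :=
              Multiset.sum_le_card_nsmul _ _ fun x hx => (hparts s x hx).2
          _ = c * (k + 1) := by simp [shift]
          _ ≤ n := h
      · exact fun s x hx => (hparts s x hx).1

theorem two_mul_sub_two_mul_logb_lt {n p q N : ℕ} (hn : 2 ≤ n) (hpow : n ^ q ≤ 2 ^ p)
    (h : 2 * (n - 2) * p < q * N) : 2 * ((n : ℝ) - 2) * Real.logb 2 n < N := by
  have hlog : q * Real.logb 2 n ≤ p := calc
    q * Real.logb 2 n = Real.logb 2 ((n : ℝ) ^ q) := (Real.logb_pow 2 n q).symm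
    _ ≤ Real.logb 2 ((2 : ℝ) ^ p) :=
      Real.logb_le_logb_of_le one_lt_two (by positivity) (by exact_mod_cast hpow)
    _ = p := by rw [Real.logb_pow, Real.logb_self_eq_one one_lt_two, mul_one]
  have hn_real : (2 : ℝ) ≤ n := by exact_mod_cast hn
  have hcast : 2 * ((n : ℝ) - 2) * p < q * N := by exact_mod_cast h
  refine lt_of_mul_lt_mul_left ?_ (Nat.cast_nonneg (α := ℝ) q)
  calc q * (2 * ((n : ℝ) - 2) * Real.logb 2 n) = 2 * ((n : ℝ) - 2) * (q * Real.logb 2 n) := by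
        ring
    _ ≤ 2 * ((n : ℝ) - 2) * p := by gcongr
    _ < q * N := hcast

theorem two_mul_sq_lt_choose {n : ℕ} (hn : 256 ≤ n) : 2 * n ^ 2 < (n / 9 + 7).choose 7 := by
  have hpow : (n / 9 + 1) ^ 7 ≤ 7 ! * (n / 9 + 7).choose 7 := by
    rw [← Nat.ascFactorial_eq_factorial_mul_choose]
    exact Nat.pow_succ_le_ascFactorial _ _
  refine Nat.lt_of_mul_lt_mul_left (a := 9 ^ 7 * 7 !) ?_
  calc 9 ^ 7 * 7 ! * (2 * n ^ 2) = n ^ 2 * (2 * 9 ^ 7 * 7 !) := by ring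
    _ < n ^ 2 * 256 ^ 5 := Nat.mul_lt_mul_of_pos_left (by decide) (pow_pos (by omega) 2)
    _ ≤ n ^ 2 * n ^ 5 := by gcongr
    _ = n ^ 7 := by ring
    _ ≤ (9 * (n / 9 + 1)) ^ 7 := Nat.pow_le_pow_left (by omega) 7
    _ = 9 ^ 7 * (n / 9 + 1) ^ 7 := mul_pow _ _ _
    _ ≤ 9 ^ 7 * 7 ! * (n / 9 + 7).choose 7 := by rw [mul_assoc]; gcongr

theorem two_mul_sub_two_mul_logb_lt_card_partition_of_mem_Icc {k a b n p q : ℕ} (ha : 2 ≤ a)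
    (hn : n ∈ Set.Icc a b) (hpow : b ^ q ≤ 2 ^ p)
    (hcount : 2 * (b - 2) * p < q * smallPartCount k a) :
    2 * ((n : ℝ) - 2) * Real.logb 2 n < Fintype.card n.Partition :=
  two_mul_sub_two_mul_logb_lt (ha.trans hn.1) ((Nat.pow_le_pow_left hn.2 q).trans hpow) <| calc
    2 * (n - 2) * p ≤ 2 * (b - 2) * p := by gcongr; exact hn.2
    _ < q * smallPartCount k a := hcount
    _ ≤ q * Fintype.card n.Partition := by gcongr; exact smallPartCount_le_card_partition k hn.1

theorem two_mul_sub_two_mul_logb_lt_card_partition_of_le {n : ℕ} (hn : 256 ≤ n) :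
    2 * ((n : ℝ) - 2) * Real.logb 2 n < Fintype.card n.Partition :=
  two_mul_sub_two_mul_logb_lt (p := n) (q := 1) (by omega) (by simpa using Nat.lt_two_pow_self.le)
    <| calc
    2 * (n - 2) * n ≤ 2 * n ^ 2 := by rw [sq, mul_assoc]; gcongr; omega
    _ < (n / 9 + 7).choose 7 := two_mul_sq_lt_choose hn
    _ = (8 + n / 9 - 1).choose (n / 9) := by
      rw [show 8 + n / 9 - 1 = n / 9 + 7 by omega, Nat.choose_symm_add]
    _ ≤ Fintype.card n.Partition := choose_le_card_partition (Nat.div_mul_le_self n 9)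
    _ = 1 * Fintype.card n.Partition := (one_mul _).symm

theorem partition_gt (n : ℕ) (hn : 12 ≤ n) :
    2 * ((n : ℝ) - 2) * Real.logb 2 n < (Fintype.card n.Partition : ℝ) := by
  obtain h | h | h | h | h | h : n ∈ Set.Icc 12 12 ∨ n ∈ Set.Icc 13 14 ∨ n ∈ Set.Icc 15 20 ∨
      n ∈ Set.Icc 21 42 ∨ n ∈ Set.Icc 43 255 ∨ 256 ≤ n := by
    simp only [Set.mem_Icc]; omega
  · exact two_mul_sub_two_mul_logb_lt_card_partition_of_mem_Icc (k := 8) (p := 18) (q := 5)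
      (by norm_num) h (by norm_num) (by decide)
  · exact two_mul_sub_two_mul_logb_lt_card_partition_of_mem_Icc (k := 8) (p := 23) (q := 6)
      (by norm_num) h (by norm_num) (by decide)
  · exact two_mul_sub_two_mul_logb_lt_card_partition_of_mem_Icc (k := 8) (p := 13) (q := 3)
      (by norm_num) h (by norm_num) (by decide)
  · exact two_mul_sub_two_mul_logb_lt_card_partition_of_mem_Icc (k := 8) (p := 27) (q := 5)
      (by norm_num) h (by norm_num) (by decide)
  · exact two_mul_sub_two_mul_logb_lt_card_partition_of_mem_Icc (k := 8) (p := 8) (q := 1)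
      (by norm_num) h (by norm_num) (by decide)
  · exact two_mul_sub_two_mul_logb_lt_card_partition_of_le h
end
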